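/- arXiv:2510.07751 — 5 statements merged into one kernel-verified Lean document; each statement's English description precedes it below -/
import Mathlib

section
/- Let G be a nonempty finite set and for each g ∈ G let a_g ≤ b_g be reals. Then the set { ∑_{g∈G} p_g : there exist binaries v_g ∈ {0,1} with ∑_{g∈G} v_g ≥ 1 and reals p_g with a_g·v_g ≤ p_g ≤ b_g·v_g for all g ∈ G } is equal to the union over all nonempty subsets S ⊆ G of the closed intervals [∑_{g∈S} a_g, ∑_{g∈S} b_g]. -/
/-!
Only the units that are on contribute to the total, each with a power in `[a g, b g]`, so the
total lies in the interval of the set `S` of units that are on. Conversely, the Minkowski sum of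
the intervals `[a g, b g]` over `S` is `[∑ a, ∑ b]`, so every point of that interval splits into
admissible powers of the units of `S`, the other units being switched off.
-/

open Finset Pointwise

theorem Set.finsetSum_Icc {ι α : Type*} [AddCommMonoid α] [LinearOrder α] [IsOrderedAddMonoid α]
    [AddLeftReflectLE α] [ExistsAddOfLE α] (s : Finset ι) {a b : ι → α}
    (hab : ∀ i ∈ s, a i ≤ b i) :
    ∑ i ∈ s, Set.Icc (a i) (b i) = Set.Icc (∑ i ∈ s, a i) (∑ i ∈ s, b i) := by
  induction s using Finset.cons_induction with
  | empty => simp [Set.singleton_zero]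
  | cons j s _ ih =>
    have hab_s : ∀ i ∈ s, a i ≤ b i := fun i hi ↦ hab i (mem_cons_of_mem hi)
    rw [sum_cons, sum_cons, sum_cons, ih hab_s,
      Set.Icc_add_Icc (hab j (mem_cons_self j s)) (sum_le_sum hab_s)]

theorem Finset.exists_mem_Icc_sum_eq {ι α : Type*} [AddCommMonoid α] [LinearOrder α]
    [IsOrderedAddMonoid α] [AddLeftReflectLE α] [ExistsAddOfLE α] {s : Finset ι} {a b : ι → α}
    {x : α} (hab : ∀ i ∈ s, a i ≤ b i) (hx : x ∈ Set.Icc (∑ i ∈ s, a i) (∑ i ∈ s, b i)) :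
    ∃ p : ι → α, (∀ i ∈ s, p i ∈ Set.Icc (a i) (b i)) ∧ ∑ i ∈ s, p i = x := by
  rw [← Set.finsetSum_Icc s hab, Set.mem_finsetSum] at hx
  obtain ⟨p, hp, rfl⟩ := hx
  exact ⟨p, fun i hi ↦ hp hi, rfl⟩

section OnOff

variable {ι R : Type*} {G : Finset ι} {v : ι → R}

theorem sum_eq_card_filter_eq_one [Semiring R] [DecidableEq R] (hv : ∀ g ∈ G, v g = 0 ∨ v g = 1) :
    ∑ g ∈ G, v g = #(G.filter (v · = 1)) := by
  rw [← sum_boole]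
  refine sum_congr rfl fun g hg ↦ ?_
  rcases hv g hg with h | h <;> simp [h]

theorem sum_mem_Icc_sum_filter_eq_one [Semiring R] [PartialOrder R] [IsOrderedAddMonoid R]
    [DecidableEq R] {a b p : ι → R} (hv : ∀ g ∈ G, v g = 0 ∨ v g = 1)
    (hp : ∀ g ∈ G, a g * v g ≤ p g ∧ p g ≤ b g * v g) :
    ∑ g ∈ G, p g ∈ Set.Icc (∑ g ∈ G.filter (v · = 1), a g) (∑ g ∈ G.filter (v · = 1), b g) := by
  have hp_off : ∀ g ∈ G, p g ≠ 0 → v g = 1 := fun g hg hpg ↦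
    (hv g hg).resolve_left fun h ↦ hpg <| by
      simpa [h] using le_antisymm (hp g hg).2 (by simpa [h] using (hp g hg).1)
  rw [← sum_filter_of_ne hp_off]
  constructor <;> refine sum_le_sum fun g hg ↦ ?_ <;> obtain ⟨hg, hvg⟩ := mem_filter.1 hg
  · simpa [hvg] using (hp g hg).1
  · simpa [hvg] using (hp g hg).2

end OnOff

open Finset in
theorem total_power_set_eq_union_Icc_general {ι : Type*} (G : Finset ι)
    (a b : ι → ℝ) (hab : ∀ g ∈ G, a g ≤ b g) :
    {x : ℝ | ∃ v p : ι → ℝ,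
        (∀ g ∈ G, v g = 0 ∨ v g = 1) ∧
        1 ≤ ∑ g ∈ G, v g ∧
        (∀ g ∈ G, a g * v g ≤ p g ∧ p g ≤ b g * v g) ∧
        x = ∑ g ∈ G, p g}
      = ⋃ S ∈ {S : Finset ι | S ⊆ G ∧ S.Nonempty},
          Set.Icc (∑ g ∈ S, a g) (∑ g ∈ S, b g) := by
  ext x
  simp only [Set.mem_ofPred_eq, Set.mem_iUnion, exists_prop]
  constructor
  · rintro ⟨v, p, hv, hv_pos, hp, rfl⟩
    refine ⟨G.filter (v · = 1), ⟨filter_subset _ _, ?_⟩, sum_mem_Icc_sum_filter_eq_one hv hp⟩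
    rw [sum_eq_card_filter_eq_one hv] at hv_pos
    exact card_pos.1 (by exact_mod_cast hv_pos)
  · rintro ⟨S, ⟨hSG, hS⟩, hx⟩
    obtain ⟨q, hq, rfl⟩ := exists_mem_Icc_sum_eq (fun g hg ↦ hab g (hSG hg)) hx
    refine ⟨Set.indicator S 1, Set.indicator S q, fun g _ ↦ ?_, ?_, fun g _ ↦ ?_,
      (sum_indicator_subset q hSG).symm⟩
    · by_cases hg : g ∈ S <;> simp [hg]
    · rw [sum_indicator_subset _ hSG]
      simpa using hS.card_pos
    · by_cases hg : g ∈ S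
      · simpa [hg] using hq g hg
      · simp [hg]

open Finset in
/-- Let `G` be a nonempty finite set and for each `g ∈ G` let `a g ≤ b g` be
reals.  The set of achievable total powers
`{ ∑_{g∈G} p g : ∃ binaries v g ∈ {0,1} with ∑ v g ≥ 1 and
a g * v g ≤ p g ≤ b g * v g for all g ∈ G }` equals the union, over all
nonempty subsets `S ⊆ G`, of the closed intervals
`[∑_{g∈S} a g, ∑_{g∈S} b g]`. -/
theorem total_power_set_eq_union_Icc {ι : Type*} (G : Finset ι)
    (hG : G.Nonempty) (a b : ι → ℝ) (hab : ∀ g ∈ G, a g ≤ b g) :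
    {x : ℝ | ∃ v p : ι → ℝ,
        (∀ g ∈ G, v g = 0 ∨ v g = 1) ∧
        1 ≤ ∑ g ∈ G, v g ∧
        (∀ g ∈ G, a g * v g ≤ p g ∧ p g ≤ b g * v g) ∧
        x = ∑ g ∈ G, p g}
      = ⋃ S ∈ {S : Finset ι | S ⊆ G ∧ S.Nonempty},
          Set.Icc (∑ g ∈ S, a g) (∑ g ∈ S, b g) :=
  total_power_set_eq_union_Icc_general G a b hab
end

section
/- Let G be a nonempty finite set with |G| = n, and for each g ∈ G let a_g ≤ b_g be reals. Assume there exists a real p* with a_g ≤ p* ≤ b_g for every g ∈ G. Then for every s ∈ {1,…,n}, the union over all subsets S ⊆ G with |S| = s of the intervals [∑_{g∈S} a_g, ∑_{g∈S} b_g] equals the single closed interval [min_{|S|=s} ∑_{g∈S} a_g, max_{|S|=s} ∑_{g∈S} b_g] (each such interval contains s·p*). Consequently, the union over all nonempty subsets S ⊆ G of [∑_{g∈S} a_g, ∑_{g∈S} b_g] can be written as a union of at most n closed intervals. -/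
/-!
Every interval `[∑_{g∈S} a g, ∑_{g∈S} b g]` with `|S| = s` contains `s * p`, so the intervals of
a fixed cardinality overlap pairwise and their union is the interval from the least left endpoint
to the greatest right endpoint. Splitting the nonempty subsets by cardinality `1, …, n` gives `n`
intervals.
-/

lemma Set.Finite.exists_isLeast_image {α β : Type*} [LinearOrder α] {s : Set β} (hs : s.Finite)
    (hne : s.Nonempty) (f : β → α) : ∃ m, IsLeast (f '' s) m :=
  let ⟨i, hi, hmin⟩ := s.exists_min_image f hs hne
  ⟨f i, Set.mem_image_of_mem f hi, Set.forall_mem_image.2 hmin⟩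

lemma Set.Finite.exists_isGreatest_image {α β : Type*} [LinearOrder α] {s : Set β}
    (hs : s.Finite) (hne : s.Nonempty) (f : β → α) : ∃ M, IsGreatest (f '' s) M :=
  let ⟨i, hi, hmax⟩ := s.exists_max_image f hs hne
  ⟨f i, Set.mem_image_of_mem f hi, Set.forall_mem_image.2 hmax⟩

lemma Set.biUnion_Icc_eq_Icc_of_forall_mem {α β : Type*} [LinearOrder α] {s : Set β}
    {l u : β → α} {c m M : α} (hc : ∀ i ∈ s, c ∈ Set.Icc (l i) (u i))
    (hm : IsLeast (l '' s) m) (hM : IsGreatest (u '' s) M) :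
    ⋃ i ∈ s, Set.Icc (l i) (u i) = Set.Icc m M := by
  apply Set.Subset.antisymm
  · refine Set.iUnion₂_subset fun i hi => Set.Icc_subset_Icc ?_ ?_
    exacts [hm.2 (Set.mem_image_of_mem l hi), hM.2 (Set.mem_image_of_mem u hi)]
  · obtain ⟨⟨i, hi, rfl⟩, _⟩ := hm
    obtain ⟨⟨j, hj, rfl⟩, _⟩ := hM
    rintro x ⟨hix, hxj⟩
    rcases le_total x c with hxc | hcx
    · exact Set.mem_biUnion hi ⟨hix, hxc.trans (hc i hi).2⟩
    · exact Set.mem_biUnion hj ⟨(hc j hj).1.trans hcx, hxj⟩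

namespace Finset

variable {ι : Type*}

lemma card_nsmul_mem_Icc_sum {N : Type*} [AddCommMonoid N] [Preorder N] [AddLeftMono N]
    {S : Finset ι} {a b : ι → N} {p : N} (hp : ∀ g ∈ S, a g ≤ p ∧ p ≤ b g) :
    #S • p ∈ Set.Icc (∑ g ∈ S, a g) (∑ g ∈ S, b g) :=
  ⟨sum_le_card_nsmul S a p fun g hg => (hp g hg).1,
    card_nsmul_le_sum S b p fun g hg => (hp g hg).2⟩

lemma finite_setOf_subset_card_eq (G : Finset ι) (s : ℕ) :
    {S : Finset ι | S ⊆ G ∧ #S = s}.Finite :=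
  (G.powersetCard s).finite_toSet.subset fun _ hS => mem_powersetCard.2 hS

lemma nonempty_setOf_subset_card_eq {G : Finset ι} {s : ℕ} (hs : s ≤ #G) :
    {S : Finset ι | S ⊆ G ∧ #S = s}.Nonempty :=
  exists_subset_card_eq hs

lemma exists_biUnion_Icc_sum_eq_Icc {G : Finset ι} {a b : ι → ℝ} {p : ℝ}
    (hp : ∀ g ∈ G, a g ≤ p ∧ p ≤ b g) {s : ℕ} (hs : s ≤ #G) :
    ∃ m M : ℝ,
      IsLeast ((fun S : Finset ι => ∑ g ∈ S, a g) '' {S : Finset ι | S ⊆ G ∧ #S = s}) m ∧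
      IsGreatest ((fun S : Finset ι => ∑ g ∈ S, b g) '' {S : Finset ι | S ⊆ G ∧ #S = s}) M ∧
      (⋃ S ∈ {S : Finset ι | S ⊆ G ∧ #S = s}, Set.Icc (∑ g ∈ S, a g) (∑ g ∈ S, b g)) =
        Set.Icc m M ∧
      ∀ S : Finset ι, S ⊆ G → #S = s → (s : ℝ) * p ∈ Set.Icc (∑ g ∈ S, a g) (∑ g ∈ S, b g) := by
  have hmid : ∀ S : Finset ι, S ⊆ G → #S = s →
      (s : ℝ) * p ∈ Set.Icc (∑ g ∈ S, a g) (∑ g ∈ S, b g) := by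
    rintro S hSG rfl
    simpa only [nsmul_eq_mul] using card_nsmul_mem_Icc_sum fun g hg => hp g (hSG hg)
  obtain ⟨m, hm⟩ := (finite_setOf_subset_card_eq G s).exists_isLeast_image
    (nonempty_setOf_subset_card_eq hs) fun S => ∑ g ∈ S, a g
  obtain ⟨M, hM⟩ := (finite_setOf_subset_card_eq G s).exists_isGreatest_image
    (nonempty_setOf_subset_card_eq hs) fun S => ∑ g ∈ S, b g
  exact ⟨m, M, hm, hM,
    Set.biUnion_Icc_eq_Icc_of_forall_mem (fun S hS => hmid S hS.1 hS.2) hm hM, hmid⟩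

lemma setOf_subset_nonempty_eq_iUnion_card (G : Finset ι) :
    {S : Finset ι | S ⊆ G ∧ S.Nonempty} = ⋃ i : Fin #G, {S | S ⊆ G ∧ #S = i + 1} := by
  ext S
  simp only [Set.mem_ofPred_eq, Set.mem_iUnion]
  constructor
  · rintro ⟨hSG, hS⟩
    have := hS.card_pos
    have := card_le_card hSG
    exact ⟨⟨#S - 1, by omega⟩, hSG, by simp only; omega⟩
  · rintro ⟨i, hSG, hS⟩
    exact ⟨hSG, card_pos.1 (by omega)⟩

end Finset

open Finset in
theorem union_Icc_card_eq_single_interval_general {ι : Type*} (G : Finset ι)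
    (n : ℕ) (hn : G.card = n) (a b : ι → ℝ)
    (p : ℝ) (hp : ∀ g ∈ G, a g ≤ p ∧ p ≤ b g) :
    (∀ s : ℕ, 1 ≤ s → s ≤ n →
      ∃ m M : ℝ,
        IsLeast ((fun S : Finset ι => ∑ g ∈ S, a g) ''
          {S : Finset ι | S ⊆ G ∧ S.card = s}) m ∧
        IsGreatest ((fun S : Finset ι => ∑ g ∈ S, b g) ''
          {S : Finset ι | S ⊆ G ∧ S.card = s}) M ∧
        (⋃ S ∈ {S : Finset ι | S ⊆ G ∧ S.card = s},
            Set.Icc (∑ g ∈ S, a g) (∑ g ∈ S, b g)) = Set.Icc m M ∧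
        (∀ S : Finset ι, S ⊆ G → S.card = s →
          (s : ℝ) * p ∈ Set.Icc (∑ g ∈ S, a g) (∑ g ∈ S, b g))) ∧
    (∃ A B : Fin n → ℝ,
      (⋃ S ∈ {S : Finset ι | S ⊆ G ∧ S.Nonempty},
          Set.Icc (∑ g ∈ S, a g) (∑ g ∈ S, b g)) =
        ⋃ i, Set.Icc (A i) (B i)) := by
  subst hn
  have hcard := fun s (_ : 1 ≤ s) (hs : s ≤ #G) => exists_biUnion_Icc_sum_eq_Icc hp hs
  refine ⟨hcard, ?_⟩
  choose m M _ _ hU _ using hcard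
  refine ⟨fun i => m (i + 1) (Nat.le_add_left 1 i) i.isLt,
    fun i => M (i + 1) (Nat.le_add_left 1 i) i.isLt, ?_⟩
  rw [setOf_subset_nonempty_eq_iUnion_card, Set.biUnion_iUnion]
  exact Set.iUnion_congr fun i => hU _ _ _

open Finset in
/-- Let `G` be a nonempty finite set with `|G| = n` and `a g ≤ b g` reals for
`g ∈ G`, and assume there is a real `p⋆` with `a g ≤ p⋆ ≤ b g` for every
`g ∈ G`.  Then for every `s ∈ {1, …, n}`, the union over all subsets `S ⊆ G`
with `|S| = s` of the intervals `[∑_{g∈S} a g, ∑_{g∈S} b g]` equals the single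
closed interval `[min_{|S|=s} ∑_{g∈S} a g, max_{|S|=s} ∑_{g∈S} b g]` (and each
such interval contains `s * p⋆`).  Consequently, the union over all nonempty
subsets `S ⊆ G` of `[∑_{g∈S} a g, ∑_{g∈S} b g]` can be written as a union of
at most `n` closed intervals. -/
theorem union_Icc_card_eq_single_interval {ι : Type*} (G : Finset ι)
    (hG : G.Nonempty) (n : ℕ) (hn : G.card = n) (a b : ι → ℝ)
    (hab : ∀ g ∈ G, a g ≤ b g) (p : ℝ) (hp : ∀ g ∈ G, a g ≤ p ∧ p ≤ b g) :
    (∀ s : ℕ, 1 ≤ s → s ≤ n →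
      ∃ m M : ℝ,
        IsLeast ((fun S : Finset ι => ∑ g ∈ S, a g) ''
          {S : Finset ι | S ⊆ G ∧ S.card = s}) m ∧
        IsGreatest ((fun S : Finset ι => ∑ g ∈ S, b g) ''
          {S : Finset ι | S ⊆ G ∧ S.card = s}) M ∧
        (⋃ S ∈ {S : Finset ι | S ⊆ G ∧ S.card = s},
            Set.Icc (∑ g ∈ S, a g) (∑ g ∈ S, b g)) = Set.Icc m M ∧
        (∀ S : Finset ι, S ⊆ G → S.card = s →
          (s : ℝ) * p ∈ Set.Icc (∑ g ∈ S, a g) (∑ g ∈ S, b g))) ∧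
    (∃ A B : Fin n → ℝ,
      (⋃ S ∈ {S : Finset ι | S ⊆ G ∧ S.Nonempty},
          Set.Icc (∑ g ∈ S, a g) (∑ g ∈ S, b g)) =
        ⋃ i, Set.Icc (A i) (B i)) :=
  union_Icc_card_eq_single_interval_general G n hn a b p hp
end

section
/- Every aggregated-feasible point can be disaggregated: if (U^gen, U^pump, U^off, P^gen, P^pump, s, w^gen, w^pump) is aggregated-feasible, then there exist u^gen, u^pump, u^off : {1,…,n}×{1,…,T} → {0,1} and p^gen, p^pump : {1,…,n}×{1,…,T} → ℝ such that (u^gen, u^pump, u^off, p^gen, p^pump, s, w^gen, w^pump) is standard-feasible for identical units and, for every t ∈ {1,…,T}, ∑_{g=1}^n u^gen_{g,t} = U^gen_t, ∑_{g=1}^n u^pump_{g,t} = U^pump_t, ∑_{g=1}^n u^off_{g,t} = U^off_t, ∑_{g=1}^n p^gen_{g,t} = P^gen_t, and ∑_{g=1}^n p^pump_{g,t} = P^pump_t. -/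
/-- A standard-feasible point for `n` identical PSH units over `T` periods:
`ugen, upump, uoff` are the binary generating/pumping/off indicators of each
unit, `pgen, ppump` the unit power levels, `s` the state of charge (indexed by
`0, …, T`), and `wgen, wpump` the binary plant status variables.  The
parameters are the common generation bounds `pgl ≤ pgu`, pumping bounds
`ppl ≤ ppu`, efficiencies `α, β`, reservoir bounds `Slo ≤ Shi`, and initial
and final levels `S0, ST`. -/
def StandardFeasible (n T : ℕ) (pgl pgu ppl ppu α β Slo Shi S0 ST : ℝ)
    (ugen upump uoff pgen ppump : Fin n → ℕ → ℝ)
    (s wgen wpump : ℕ → ℝ) : Prop :=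
  (∀ g : Fin n, ∀ t : ℕ, 1 ≤ t → t ≤ T →
    (ugen g t = 0 ∨ ugen g t = 1) ∧
    (upump g t = 0 ∨ upump g t = 1) ∧
    (uoff g t = 0 ∨ uoff g t = 1) ∧
    ugen g t + upump g t + uoff g t = 1 ∧
    pgl * ugen g t ≤ pgen g t ∧ pgen g t ≤ pgu * ugen g t ∧
    ppl * upump g t ≤ ppump g t ∧ ppump g t ≤ ppu * upump g t ∧
    upump g t ≤ wpump t ∧ ugen g t ≤ wgen t) ∧
  (∀ t : ℕ, 1 ≤ t → t ≤ T →
    (wgen t = 0 ∨ wgen t = 1) ∧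
    (wpump t = 0 ∨ wpump t = 1) ∧
    wpump t + wgen t ≤ 1 ∧
    s t = s (t - 1) + α * (∑ g : Fin n, ppump g t)
        - β * (∑ g : Fin n, pgen g t) ∧
    s (t - 1) + α * (∑ g : Fin n, ppump g t) ≤ Shi ∧
    Slo ≤ s (t - 1) - β * (∑ g : Fin n, pgen g t)) ∧
  s 0 = S0 ∧ s T = ST

/-- An aggregated-feasible point for `n` identical PSH units over `T` periods:
`Ugen, Upump, Uoff` are the (nonnegative, integer) numbers of units
generating, pumping and off, `Pgen, Ppump` the total generation and pumping
powers, `s` the state of charge (indexed by `0, …, T`), and `wgen, wpump` the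
binary plant status variables. -/
def AggregatedFeasible (n T : ℕ) (pgl pgu ppl ppu α β Slo Shi S0 ST : ℝ)
    (Ugen Upump Uoff : ℕ → ℤ) (Pgen Ppump : ℕ → ℝ)
    (s wgen wpump : ℕ → ℝ) : Prop :=
  (∀ t : ℕ, 1 ≤ t → t ≤ T →
    0 ≤ Ugen t ∧ 0 ≤ Upump t ∧ 0 ≤ Uoff t ∧
    Ugen t + Upump t + Uoff t = (n : ℤ) ∧
    pgl * (Ugen t : ℝ) ≤ Pgen t ∧ Pgen t ≤ pgu * (Ugen t : ℝ) ∧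
    ppl * (Upump t : ℝ) ≤ Ppump t ∧ Ppump t ≤ ppu * (Upump t : ℝ) ∧
    (wgen t = 0 ∨ wgen t = 1) ∧
    (wpump t = 0 ∨ wpump t = 1) ∧
    wpump t + wgen t ≤ 1 ∧
    (Upump t : ℝ) ≤ (n : ℝ) * wpump t ∧
    (Ugen t : ℝ) ≤ (n : ℝ) * wgen t ∧
    s t = s (t - 1) + α * Ppump t - β * Pgen t ∧
    s (t - 1) + α * Ppump t ≤ Shi ∧
    Slo ≤ s (t - 1) - β * Pgen t) ∧
  s 0 = S0 ∧ s T = ST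


lemma sum_ite_ico (n a b : ℕ) (hab : a + b ≤ n) (c : ℝ) :
    ∑ g : Fin n, (if a ≤ (g : ℕ) ∧ (g : ℕ) < a + b then c else 0) = b * c := by
  rw [Fin.sum_univ_eq_sum_range (fun i => if a ≤ i ∧ i < a + b then c else 0)]
  have h1 : ∀ i ∈ Finset.range n, (if a ≤ i ∧ i < a + b then c else 0)
      = if i ∈ Finset.Ico a (a + b) then c else 0 := by
    intro i _; simp [Finset.mem_Ico]
  rw [Finset.sum_congr rfl h1, Finset.sum_ite_mem]
  have h2 : Finset.range n ∩ Finset.Ico a (a + b) = Finset.Ico a (a + b) := by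
    apply Finset.inter_eq_right.mpr
    intro i hi
    simp only [Finset.mem_Ico, Finset.mem_range] at *
    omega
  rw [h2, Finset.sum_const, Nat.card_Ico]
  simp [nsmul_eq_mul]

lemma sum_ite_lt (n a : ℕ) (ha : a ≤ n) (c : ℝ) :
    ∑ g : Fin n, (if (g : ℕ) < a then c else 0) = a * c := by
  have h := sum_ite_ico n 0 a (by omega) c
  simpa using h

/-- Every aggregated-feasible point can be disaggregated: if
`(Ugen, Upump, Uoff, Pgen, Ppump, s, wgen, wpump)` is aggregated-feasible for
`n` identical units, then there exist unit-level binary variables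
`ugen, upump, uoff` and power variables `pgen, ppump` forming a
standard-feasible point whose per-period sums recover
`Ugen, Upump, Uoff, Pgen, Ppump`. -/
theorem aggregatedFeasible_disaggregates (n T : ℕ) (hn : 1 ≤ n) (hT : 1 ≤ T)
    (pgl pgu ppl ppu α β Slo Shi S0 ST : ℝ)
    (hpgl : 0 ≤ pgl) (hpg : pgl ≤ pgu) (hppl : 0 ≤ ppl) (hpp : ppl ≤ ppu)
    (hα : 0 ≤ α) (hβ : 0 ≤ β) (hS : Slo ≤ Shi)
    (Ugen Upump Uoff : ℕ → ℤ) (Pgen Ppump : ℕ → ℝ)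
    (s wgen wpump : ℕ → ℝ)
    (hagg : AggregatedFeasible n T pgl pgu ppl ppu α β Slo Shi S0 ST
      Ugen Upump Uoff Pgen Ppump s wgen wpump) :
    ∃ ugen upump uoff pgen ppump : Fin n → ℕ → ℝ,
      StandardFeasible n T pgl pgu ppl ppu α β Slo Shi S0 ST
        ugen upump uoff pgen ppump s wgen wpump ∧
      (∀ t : ℕ, 1 ≤ t → t ≤ T →
        (∑ g : Fin n, ugen g t) = (Ugen t : ℝ) ∧
        (∑ g : Fin n, upump g t) = (Upump t : ℝ) ∧
        (∑ g : Fin n, uoff g t) = (Uoff t : ℝ) ∧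
        (∑ g : Fin n, pgen g t) = Pgen t ∧
        (∑ g : Fin n, ppump g t) = Ppump t) := by
  classical
  obtain ⟨H, hs0, hsT⟩ := hagg
  have key : ∀ t, 1 ≤ t → t ≤ T →
      (∑ g : Fin n, (if (g : ℕ) < (Ugen t).toNat then (1:ℝ) else 0)) = (Ugen t : ℝ) ∧
      (∑ g : Fin n, (if (Ugen t).toNat ≤ (g : ℕ) ∧ (g : ℕ) < (Ugen t).toNat + (Upump t).toNat
        then (1:ℝ) else 0)) = (Upump t : ℝ) ∧
      (∑ g : Fin n, (1 - (if (g : ℕ) < (Ugen t).toNat then (1:ℝ) else 0)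
        - (if (Ugen t).toNat ≤ (g : ℕ) ∧ (g : ℕ) < (Ugen t).toNat + (Upump t).toNat
          then (1:ℝ) else 0))) = (Uoff t : ℝ) ∧
      (∑ g : Fin n, (if (g : ℕ) < (Ugen t).toNat
        then Pgen t / ((Ugen t).toNat : ℝ) else 0)) = Pgen t ∧
      (∑ g : Fin n, (if (Ugen t).toNat ≤ (g : ℕ) ∧ (g : ℕ) < (Ugen t).toNat + (Upump t).toNat
        then Ppump t / ((Upump t).toNat : ℝ) else 0)) = Ppump t := by
    intro t h1 h2
    obtain ⟨h0g, h0p, h0o, hsum, hPgl, hPgu, hPpl, hPpu, hwg, hwp, hw1, hUpw, hUgw, hseq,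
      hshi, hslo⟩ := H t h1 h2
    set a := (Ugen t).toNat with ha
    set b := (Upump t).toNat with hb
    have haZ : (a : ℤ) = Ugen t := Int.toNat_of_nonneg h0g
    have hbZ : (b : ℤ) = Upump t := Int.toNat_of_nonneg h0p
    have hab : a + b ≤ n := by omega
    have haR : ((a : ℕ) : ℝ) = (Ugen t : ℝ) := by exact_mod_cast congrArg (Int.cast : ℤ → ℝ) haZ
    have hbR : ((b : ℕ) : ℝ) = (Upump t : ℝ) := by exact_mod_cast congrArg (Int.cast : ℤ → ℝ) hbZ
    refine ⟨?_, ?_, ?_, ?_, ?_⟩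
    · rw [sum_ite_lt n a (by omega), mul_one]; exact haR
    · rw [sum_ite_ico n a b hab, mul_one]; exact hbR
    · rw [Finset.sum_sub_distrib, Finset.sum_sub_distrib, sum_ite_lt n a (by omega),
        sum_ite_ico n a b hab, Finset.sum_const, Finset.card_univ, Fintype.card_fin]
      have hcast : ((Uoff t : ℝ)) = (n : ℝ) - (Ugen t : ℝ) - (Upump t : ℝ) := by
        have h := congrArg (Int.cast : ℤ → ℝ) hsum
        push_cast at h
        linarith
      simp only [nsmul_eq_mul, mul_one]
      rw [hcast, haR, hbR]
    · rcases Nat.eq_zero_or_pos a with h | h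
      · have h0 : (Ugen t : ℝ) = 0 := by rw [← haR, h]; simp
        have hP0 : Pgen t = 0 := by
          rw [h0] at hPgl hPgu
          simp at hPgl hPgu
          linarith
        rw [sum_ite_lt n a (by omega), h, hP0]
        simp
      · have ha0 : ((a : ℕ) : ℝ) ≠ 0 := by positivity
        rw [sum_ite_lt n a (by omega), mul_comm, div_mul_cancel₀ _ ha0]
    · rcases Nat.eq_zero_or_pos b with h | h
      · have h0 : (Upump t : ℝ) = 0 := by rw [← hbR, h]; simp
        have hP0 : Ppump t = 0 := by
          rw [h0] at hPpl hPpu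
          simp at hPpl hPpu
          linarith
        rw [sum_ite_ico n a b hab, h, hP0]
        simp
      · have hb0 : ((b : ℕ) : ℝ) ≠ 0 := by positivity
        rw [sum_ite_ico n a b hab, mul_comm, div_mul_cancel₀ _ hb0]
  refine ⟨fun g t => if (g : ℕ) < (Ugen t).toNat then 1 else 0,
    fun g t => if (Ugen t).toNat ≤ (g : ℕ) ∧ (g : ℕ) < (Ugen t).toNat + (Upump t).toNat
      then 1 else 0,
    fun g t => 1 - (if (g : ℕ) < (Ugen t).toNat then (1:ℝ) else 0)
      - (if (Ugen t).toNat ≤ (g : ℕ) ∧ (g : ℕ) < (Ugen t).toNat + (Upump t).toNat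
        then (1:ℝ) else 0),
    fun g t => if (g : ℕ) < (Ugen t).toNat then Pgen t / ((Ugen t).toNat : ℝ) else 0,
    fun g t => if (Ugen t).toNat ≤ (g : ℕ) ∧ (g : ℕ) < (Ugen t).toNat + (Upump t).toNat
      then Ppump t / ((Upump t).toNat : ℝ) else 0,
    ⟨?_, ?_, hs0, hsT⟩, key⟩
  · -- unit-level constraints
    intro g t h1 h2
    dsimp only
    obtain ⟨h0g, h0p, h0o, hsum, hPgl, hPgu, hPpl, hPpu, hwg, hwp, hw1, hUpw, hUgw, hseq,
      hshi, hslo⟩ := H t h1 h2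
    set a := (Ugen t).toNat with ha
    set b := (Upump t).toNat with hb
    have haZ : (a : ℤ) = Ugen t := Int.toNat_of_nonneg h0g
    have hbZ : (b : ℤ) = Upump t := Int.toNat_of_nonneg h0p
    have haR : ((a : ℕ) : ℝ) = (Ugen t : ℝ) := by exact_mod_cast congrArg (Int.cast : ℤ → ℝ) haZ
    have hbR : ((b : ℕ) : ℝ) = (Upump t : ℝ) := by exact_mod_cast congrArg (Int.cast : ℤ → ℝ) hbZ
    refine ⟨?_, ?_, ?_, by ring, ?_, ?_, ?_, ?_, ?_, ?_⟩
    · split_ifs <;> simp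
    · split_ifs <;> simp
    · split_ifs with hx hy hy
      · exfalso; omega
      · left; ring
      · left; ring
      · right; ring
    · by_cases hg : (g : ℕ) < a
      · have hpos : (0 : ℝ) < (a : ℝ) := by
          have : 1 ≤ a := by omega
          exact_mod_cast Nat.pos_of_ne_zero (by omega)
        rw [if_pos hg, if_pos hg, mul_one, le_div_iff₀ hpos, haR]
        exact hPgl
      · rw [if_neg hg, if_neg hg, mul_zero]
    · by_cases hg : (g : ℕ) < a
      · have hpos : (0 : ℝ) < (a : ℝ) := by
          exact_mod_cast Nat.pos_of_ne_zero (by omega)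
        rw [if_pos hg, if_pos hg, mul_one, div_le_iff₀ hpos, haR]
        exact hPgu
      · rw [if_neg hg, if_neg hg, mul_zero]
    · by_cases hg : a ≤ (g : ℕ) ∧ (g : ℕ) < a + b
      · have hpos : (0 : ℝ) < (b : ℝ) := by
          exact_mod_cast Nat.pos_of_ne_zero (by omega)
        rw [if_pos hg, if_pos hg, mul_one, le_div_iff₀ hpos, hbR]
        exact hPpl
      · rw [if_neg hg, if_neg hg, mul_zero]
    · by_cases hg : a ≤ (g : ℕ) ∧ (g : ℕ) < a + b
      · have hpos : (0 : ℝ) < (b : ℝ) := by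
          exact_mod_cast Nat.pos_of_ne_zero (by omega)
        rw [if_pos hg, if_pos hg, mul_one, div_le_iff₀ hpos, hbR]
        exact hPpu
      · rw [if_neg hg, if_neg hg, mul_zero]
    · by_cases hg : a ≤ (g : ℕ) ∧ (g : ℕ) < a + b
      · have hb1 : (1 : ℝ) ≤ (Upump t : ℝ) := by
          have : (1 : ℤ) ≤ Upump t := by omega
          exact_mod_cast this
        rcases hwp with h | h
        · exfalso; rw [h, mul_zero] at hUpw; linarith
        · rw [if_pos hg, h]
      · rw [if_neg hg]
        rcases hwp with h | h <;> rw [h] <;> norm_num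
    · by_cases hg : (g : ℕ) < a
      · have ha1 : (1 : ℝ) ≤ (Ugen t : ℝ) := by
          have : (1 : ℤ) ≤ Ugen t := by omega
          exact_mod_cast this
        rcases hwg with h | h
        · exfalso; rw [h, mul_zero] at hUgw; linarith
        · rw [if_pos hg, h]
      · rw [if_neg hg]
        rcases hwg with h | h <;> rw [h] <;> norm_num
  · -- plant-level constraints
    intro t h1 h2
    dsimp only
    obtain ⟨h0g, h0p, h0o, hsum, hPgl, hPgu, hPpl, hPpu, hwg, hwp, hw1, hUpw, hUgw, hseq,
      hshi, hslo⟩ := H t h1 h2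
    obtain ⟨k1, k2, k3, k4, k5⟩ := key t h1 h2
    refine ⟨hwg, hwp, hw1, ?_, ?_, ?_⟩
    · rw [k4, k5]; exact hseq
    · rw [k5]; exact hshi
    · rw [k4]; exact hslo
end

section
/- The standard and aggregated formulations for identical units have the same projection onto the total-power, state-of-charge and plant-status variables: the set of tuples (P^gen, P^pump, s, w^gen, w^pump) with P^gen, P^pump : {1,…,T} → ℝ, s : {0,…,T} → ℝ, w^gen, w^pump : {1,…,T} → {0,1}, for which there exists a standard-feasible point with P^gen_t = ∑_{g=1}^n p^gen_{g,t} and P^pump_t = ∑_{g=1}^n p^pump_{g,t} for all t, is equal to the set of such tuples for which there exist nonnegative integers U^gen, U^pump, U^off : {1,…,T} → ℤ making (U^gen, U^pump, U^off, P^gen, P^pump, s, w^gen, w^pump) aggregated-feasible. In particular, for any objective function depending only on (P^gen, P^pump, s, w^gen, w^pump), the standard and aggregated formulations have the same optimal value. -/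
/-- The projection of the standard formulation (identical units) onto the
total-power, state-of-charge and plant-status variables
`(Pgen, Ppump, s, wgen, wpump)`. -/
def StandardProjection (n T : ℕ) (pgl pgu ppl ppu α β Slo Shi S0 ST : ℝ) :
    Set ((ℕ → ℝ) × (ℕ → ℝ) × (ℕ → ℝ) × (ℕ → ℝ) × (ℕ → ℝ)) :=
  {x | ∃ ugen upump uoff pgen ppump : Fin n → ℕ → ℝ,
    StandardFeasible n T pgl pgu ppl ppu α β Slo Shi S0 ST
      ugen upump uoff pgen ppump x.2.2.1 x.2.2.2.1 x.2.2.2.2 ∧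
    ∀ t : ℕ, 1 ≤ t → t ≤ T →
      x.1 t = ∑ g : Fin n, pgen g t ∧ x.2.1 t = ∑ g : Fin n, ppump g t}

/-- The projection of the aggregated formulation (identical units) onto the
total-power, state-of-charge and plant-status variables
`(Pgen, Ppump, s, wgen, wpump)`. -/
def AggregatedProjection (n T : ℕ) (pgl pgu ppl ppu α β Slo Shi S0 ST : ℝ) :
    Set ((ℕ → ℝ) × (ℕ → ℝ) × (ℕ → ℝ) × (ℕ → ℝ) × (ℕ → ℝ)) :=
  {x | ∃ Ugen Upump Uoff : ℕ → ℤ,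
    AggregatedFeasible n T pgl pgu ppl ppu α β Slo Shi S0 ST
      Ugen Upump Uoff x.1 x.2.1 x.2.2.1 x.2.2.2.1 x.2.2.2.2}

lemma sum_if_Ico (n : ℕ) (a b : ℤ) (ha : 0 ≤ a) (hab : a ≤ b) (hbn : b ≤ (n : ℤ)) (c : ℝ) :
    ∑ g : Fin n, (if a ≤ (g : ℤ) ∧ (g : ℤ) < b then c else 0) = ((b - a : ℤ) : ℝ) * c := by
  classical
  rw [Fin.sum_univ_eq_sum_range (fun i => if a ≤ (i : ℤ) ∧ (i : ℤ) < b then c else 0)]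
  rw [← Finset.sum_filter]
  have h1 : (Finset.range n).filter (fun i : ℕ => a ≤ (i : ℤ) ∧ (i : ℤ) < b)
      = Finset.Ico a.toNat b.toNat := by
    ext i; simp only [Finset.mem_filter, Finset.mem_range, Finset.mem_Ico]; omega
  rw [h1, Finset.sum_const, Nat.card_Ico, nsmul_eq_mul]
  have h2 : ((b.toNat - a.toNat : ℕ) : ℝ) = ((b - a : ℤ) : ℝ) := by
    have h3 : (b.toNat - a.toNat : ℕ) = (b - a).toNat := by omega
    rw [h3]
    exact_mod_cast congrArg (fun z : ℤ => (z : ℝ)) (Int.toNat_of_nonneg (by omega : (0:ℤ) ≤ b - a))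
  rw [h2]

/-- The standard and aggregated formulations for identical units have the same
projection onto the total-power, state-of-charge and plant-status variables
`(Pgen, Ppump, s, wgen, wpump)`; in particular, for any objective function
depending only on these variables, the two formulations have the same optimal
value. -/
theorem standardProjection_eq_aggregatedProjection (n T : ℕ)
    (hn : 1 ≤ n) (hT : 1 ≤ T)
    (pgl pgu ppl ppu α β Slo Shi S0 ST : ℝ)
    (hpgl : 0 ≤ pgl) (hpg : pgl ≤ pgu) (hppl : 0 ≤ ppl) (hpp : ppl ≤ ppu)
    (hα : 0 ≤ α) (hβ : 0 ≤ β) (hS : Slo ≤ Shi) :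
    StandardProjection n T pgl pgu ppl ppu α β Slo Shi S0 ST
      = AggregatedProjection n T pgl pgu ppl ppu α β Slo Shi S0 ST ∧
    ∀ c : (ℕ → ℝ) × (ℕ → ℝ) × (ℕ → ℝ) × (ℕ → ℝ) × (ℕ → ℝ) → ℝ,
      sInf (c '' StandardProjection n T pgl pgu ppl ppu α β Slo Shi S0 ST)
        = sInf (c '' AggregatedProjection n T pgl pgu ppl ppu α β Slo Shi S0 ST) := by
  have hset : StandardProjection n T pgl pgu ppl ppu α β Slo Shi S0 ST
      = AggregatedProjection n T pgl pgu ppl ppu α β Slo Shi S0 ST := by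
    ext x
    obtain ⟨P, Q, s, wg, wp⟩ := x
    simp only [StandardProjection, AggregatedProjection, Set.mem_setOf_eq]
    constructor
    · rintro ⟨ugen, upump, uoff, pgen, ppump, ⟨hunit, hper, hs0, hsT⟩, hsum⟩
      refine ⟨fun t => ∑ g : Fin n, (if ugen g t = 1 then (1:ℤ) else 0),
              fun t => ∑ g : Fin n, (if upump g t = 1 then (1:ℤ) else 0),
              fun t => (n:ℤ) - (∑ g : Fin n, (if ugen g t = 1 then (1:ℤ) else 0))
                       - (∑ g : Fin n, (if upump g t = 1 then (1:ℤ) else 0)),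
              ?_, hs0, hsT⟩
      intro t h1 h2
      have hg := fun g => hunit g t h1 h2
      have hUcast : ((∑ g : Fin n, (if ugen g t = 1 then (1:ℤ) else 0) : ℤ) : ℝ)
          = ∑ g : Fin n, ugen g t := by
        push_cast
        refine Finset.sum_congr rfl fun g _ => ?_
        rcases (hg g).1 with h | h <;> simp [h]
      have hVcast : ((∑ g : Fin n, (if upump g t = 1 then (1:ℤ) else 0) : ℤ) : ℝ)
          = ∑ g : Fin n, upump g t := by
        push_cast
        refine Finset.sum_congr rfl fun g _ => ?_
        rcases (hg g).2.1 with h | h <;> simp [h]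
      have hUV : (∑ g : Fin n, (if ugen g t = 1 then (1:ℤ) else 0))
          + (∑ g : Fin n, (if upump g t = 1 then (1:ℤ) else 0)) ≤ (n : ℤ) := by
        rw [← Finset.sum_add_distrib]
        calc (∑ g : Fin n, ((if ugen g t = 1 then (1:ℤ) else 0)
                + (if upump g t = 1 then (1:ℤ) else 0)))
            ≤ ∑ _g : Fin n, (1:ℤ) := by
              refine Finset.sum_le_sum fun g _ => ?_
              obtain ⟨hu1, hu2, hu3, hu4, _⟩ := hg g
              split_ifs with ha hb
              · exfalso; rcases hu3 with h | h <;> linarith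
              · norm_num
              · norm_num
              · norm_num
          _ = (n : ℤ) := by simp
      have hU0 : (0:ℤ) ≤ ∑ g : Fin n, (if ugen g t = 1 then (1:ℤ) else 0) :=
        Finset.sum_nonneg fun g _ => by split_ifs <;> norm_num
      have hV0 : (0:ℤ) ≤ ∑ g : Fin n, (if upump g t = 1 then (1:ℤ) else 0) :=
        Finset.sum_nonneg fun g _ => by split_ifs <;> norm_num
      obtain ⟨hwg01, hwp01, hw1, hst, hshi, hslo⟩ := hper t h1 h2
      obtain ⟨hP, hQ⟩ := hsum t h1 h2
      refine ⟨hU0, hV0, by beta_reduce; omega, by beta_reduce; ring, ?_, ?_, ?_, ?_, hwg01, hwp01, hw1, ?_, ?_, ?_, ?_, ?_⟩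
      · rw [hUcast, hP, Finset.mul_sum]
        exact Finset.sum_le_sum fun g _ => (hg g).2.2.2.2.1
      · rw [hUcast, hP, Finset.mul_sum]
        exact Finset.sum_le_sum fun g _ => (hg g).2.2.2.2.2.1
      · rw [hVcast, hQ, Finset.mul_sum]
        exact Finset.sum_le_sum fun g _ => (hg g).2.2.2.2.2.2.1
      · rw [hVcast, hQ, Finset.mul_sum]
        exact Finset.sum_le_sum fun g _ => (hg g).2.2.2.2.2.2.2.1
      · rw [hVcast]
        calc ∑ g : Fin n, upump g t ≤ ∑ _g : Fin n, wp t :=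
              Finset.sum_le_sum fun g _ => (hg g).2.2.2.2.2.2.2.2.1
          _ = (n : ℝ) * wp t := by
              rw [Finset.sum_const, Finset.card_univ, Fintype.card_fin, nsmul_eq_mul]
      · rw [hUcast]
        calc ∑ g : Fin n, ugen g t ≤ ∑ _g : Fin n, wg t :=
              Finset.sum_le_sum fun g _ => (hg g).2.2.2.2.2.2.2.2.2
          _ = (n : ℝ) * wg t := by
              rw [Finset.sum_const, Finset.card_univ, Fintype.card_fin, nsmul_eq_mul]
      · rw [hP, hQ]; exact hst
      · rw [hQ]; exact hshi
      · rw [hP]; exact hslo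
    · rintro ⟨U, V, W, hAgg, hs0, hsT⟩
      have hAgg1 := hAgg
      refine ⟨fun g t => if (g:ℤ) < U t then 1 else 0,
              fun g t => if U t ≤ (g:ℤ) ∧ (g:ℤ) < U t + V t then 1 else 0,
              fun g t => if U t + V t ≤ (g:ℤ) then 1 else 0,
              fun g t => if (g:ℤ) < U t then P t / (U t : ℝ) else 0,
              fun g t => if U t ≤ (g:ℤ) ∧ (g:ℤ) < U t + V t then Q t / (V t : ℝ) else 0,
              ?_⟩
      have hsumgen : ∀ t : ℕ, 1 ≤ t → t ≤ T →
          (∑ g : Fin n, (if (g:ℤ) < U t then P t / (U t : ℝ) else 0)) = P t := by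
        intro t h1 h2
        obtain ⟨hU0, hV0, hW0, hsumn, hPl, hPu, _⟩ := hAgg1 t h1 h2
        have hUn : U t ≤ (n : ℤ) := by omega
        have e : (∑ g : Fin n, (if (g:ℤ) < U t then P t / (U t : ℝ) else 0))
            = ((U t - 0 : ℤ) : ℝ) * (P t / (U t : ℝ)) := by
          rw [← sum_if_Ico n 0 (U t) le_rfl hU0 hUn (P t / (U t : ℝ))]
          refine Finset.sum_congr rfl fun g _ => ?_
          simp [Int.natCast_nonneg]
        rw [e]
        rcases eq_or_lt_of_le hU0 with hU | hU
        · have hP0 : P t = 0 := by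
            rw [← hU] at hPl hPu
            push_cast at hPl hPu
            nlinarith
          rw [← hU, hP0]; norm_num
        · have hne : ((U t : ℝ)) ≠ 0 := by
            have : (0:ℝ) < (U t : ℝ) := by exact_mod_cast hU
            linarith
          rw [sub_zero, mul_comm, div_mul_cancel₀ _ hne]
      have hsumpump : ∀ t : ℕ, 1 ≤ t → t ≤ T →
          (∑ g : Fin n, (if U t ≤ (g:ℤ) ∧ (g:ℤ) < U t + V t then Q t / (V t : ℝ) else 0))
            = Q t := by
        intro t h1 h2
        obtain ⟨hU0, hV0, hW0, hsumn, _, _, hQl, hQu, _⟩ := hAgg1 t h1 h2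
        have hUVn : U t + V t ≤ (n : ℤ) := by omega
        rw [sum_if_Ico n (U t) (U t + V t) hU0 (by omega) hUVn (Q t / (V t : ℝ))]
        have e2 : ((U t + V t - U t : ℤ) : ℝ) = (V t : ℝ) := by push_cast; ring
        rw [e2]
        rcases eq_or_lt_of_le hV0 with hV | hV
        · have hQ0 : Q t = 0 := by
            rw [← hV] at hQl hQu
            push_cast at hQl hQu
            nlinarith
          rw [← hV, hQ0]; norm_num
        · have hne : ((V t : ℝ)) ≠ 0 := by
            have : (0:ℝ) < (V t : ℝ) := by exact_mod_cast hV
            linarith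
          rw [mul_comm, div_mul_cancel₀ _ hne]
      refine ⟨⟨?_, ?_, hs0, hsT⟩, ?_⟩
      · -- per-unit constraints
        intro g t h1 h2
        obtain ⟨hU0, hV0, hW0, hsumn, hPl, hPu, hQl, hQu, hwg01, hwp01, hw1,
          hVn, hUn, hst, hshi, hslo⟩ := hAgg1 t h1 h2
        have hg0 : (0:ℤ) ≤ (g:ℤ) := Int.natCast_nonneg _
        have hgn : (g:ℤ) < (n:ℤ) := by exact_mod_cast g.2
        refine ⟨?_, ?_, ?_, ?_, ?_, ?_, ?_, ?_, ?_, ?_⟩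
        · beta_reduce; split_ifs <;> simp
        · beta_reduce; split_ifs <;> simp
        · beta_reduce; split_ifs <;> simp
        · beta_reduce; split_ifs <;> (try norm_num) <;> omega
        · beta_reduce; split_ifs with h
          · have hUpos : (0:ℝ) < (U t : ℝ) := by
              have : (0:ℤ) < U t := by omega
              exact_mod_cast this
            rw [mul_one, le_div_iff₀ hUpos]
            exact hPl
          · simp
        · beta_reduce; split_ifs with h
          · have hUpos : (0:ℝ) < (U t : ℝ) := by
              have : (0:ℤ) < U t := by omega
              exact_mod_cast this
            rw [mul_one, div_le_iff₀ hUpos]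
            exact hPu
          · simp
        · beta_reduce; split_ifs with h
          · have hVpos : (0:ℝ) < (V t : ℝ) := by
              have : (0:ℤ) < V t := by omega
              exact_mod_cast this
            rw [mul_one, le_div_iff₀ hVpos]
            exact hQl
          · simp
        · beta_reduce; split_ifs with h
          · have hVpos : (0:ℝ) < (V t : ℝ) := by
              have : (0:ℤ) < V t := by omega
              exact_mod_cast this
            rw [mul_one, div_le_iff₀ hVpos]
            exact hQu
          · simp
        · beta_reduce; split_ifs with h
          · rcases hwp01 with hw | hw
            · exfalso
              rw [hw, mul_zero] at hVn
              have : (1:ℝ) ≤ (V t : ℝ) := by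
                have : (1:ℤ) ≤ V t := by omega
                exact_mod_cast this
              linarith
            · rw [hw]
          · rcases hwp01 with hw | hw <;> rw [hw] <;> norm_num
        · beta_reduce; split_ifs with h
          · rcases hwg01 with hw | hw
            · exfalso
              rw [hw, mul_zero] at hUn
              have : (1:ℝ) ≤ (U t : ℝ) := by
                have : (1:ℤ) ≤ U t := by omega
                exact_mod_cast this
              linarith
            · rw [hw]
          · rcases hwg01 with hw | hw <;> rw [hw] <;> norm_num
      · -- per-period constraints
        intro t h1 h2
        obtain ⟨hU0, hV0, hW0, hsumn, hPl, hPu, hQl, hQu, hwg01, hwp01, hw1,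
          hVn, hUn, hst, hshi, hslo⟩ := hAgg1 t h1 h2
        rw [hsumgen t h1 h2, hsumpump t h1 h2]
        exact ⟨hwg01, hwp01, hw1, hst, hshi, hslo⟩
      · intro t h1 h2
        exact ⟨(hsumgen t h1 h2).symm, (hsumpump t h1 h2).symm⟩
  refine ⟨hset, fun c => by rw [hset]⟩
end

section
/- The standard and presolved formulations for units with common efficiencies have the same projection onto total powers and state of charge: the set of tuples (P^gen, P^pump, s) with P^gen, P^pump : {1,…,T} → ℝ and s : {0,…,T} → ℝ for which there exists a standard-feasible point (with unit-dependent bounds and common efficiencies α, β) such that P^gen_t = ∑_{g=1}^n p^gen_{g,t} and P^pump_t = ∑_{g=1}^n p^pump_{g,t} for all t, is equal to the set of tuples (P^gen, P^pump, s) for which there exist X^pump, z^pump, X^gen, z^gen, w^gen, w^pump making (P^gen, P^pump, X^pump, z^pump, X^gen, z^gen, s, w^gen, w^pump) presolved-feasible. -/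
/-- A standard-feasible point for `n` PSH units with unit-dependent bounds and
common efficiencies `α, β`: unit `g` has generation bounds
`agen g ≤ bgen g` and pumping bounds `apump g ≤ bpump g`; `ugen, upump, uoff`
are the binary unit status variables, `pgen, ppump` the unit power levels,
`s` the state of charge (indexed by `0, …, T`), and `wgen, wpump` the binary
plant status variables. -/
def StandardFeasibleN (n T : ℕ) (agen bgen apump bpump : Fin n → ℝ)
    (α β Slo Shi S0 ST : ℝ)
    (ugen upump uoff pgen ppump : Fin n → ℕ → ℝ)
    (s wgen wpump : ℕ → ℝ) : Prop :=
  (∀ g : Fin n, ∀ t : ℕ, 1 ≤ t → t ≤ T →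
    (ugen g t = 0 ∨ ugen g t = 1) ∧
    (upump g t = 0 ∨ upump g t = 1) ∧
    (uoff g t = 0 ∨ uoff g t = 1) ∧
    ugen g t + upump g t + uoff g t = 1 ∧
    agen g * ugen g t ≤ pgen g t ∧ pgen g t ≤ bgen g * ugen g t ∧
    apump g * upump g t ≤ ppump g t ∧ ppump g t ≤ bpump g * upump g t ∧
    upump g t ≤ wpump t ∧ ugen g t ≤ wgen t) ∧
  (∀ t : ℕ, 1 ≤ t → t ≤ T →
    (wgen t = 0 ∨ wgen t = 1) ∧
    (wpump t = 0 ∨ wpump t = 1) ∧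
    wpump t + wgen t ≤ 1 ∧
    s t = s (t - 1) + α * (∑ g : Fin n, ppump g t)
        - β * (∑ g : Fin n, pgen g t) ∧
    s (t - 1) + α * (∑ g : Fin n, ppump g t) ≤ Shi ∧
    Slo ≤ s (t - 1) - β * (∑ g : Fin n, pgen g t)) ∧
  s 0 = S0 ∧ s T = ST

/-- A presolved-feasible point: the total pumping power `Ppump t` is split as
`∑ i, Xp t i` with interval-selection binaries `zp t i` summing to the plant
pumping status `wpump t`, where `[l i, u i]`, `i = 1, …, k`, are the disjoint
pumping intervals obtained by presolving, and similarly the total generation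
power `Pgen t` uses the disjoint generation intervals `[l' i, u' i]`,
`i = 1, …, k'`; `s` is the state of charge (indexed by `0, …, T`). -/
def PresolvedFeasible (T k k' : ℕ) (l u : Fin k → ℝ) (l' u' : Fin k' → ℝ)
    (α β Slo Shi S0 ST : ℝ)
    (Pgen Ppump : ℕ → ℝ)
    (Xp : ℕ → Fin k → ℝ) (zp : ℕ → Fin k → ℝ)
    (Xg : ℕ → Fin k' → ℝ) (zg : ℕ → Fin k' → ℝ)
    (s wgen wpump : ℕ → ℝ) : Prop :=
  (∀ t : ℕ, 1 ≤ t → t ≤ T →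
    (wgen t = 0 ∨ wgen t = 1) ∧
    (wpump t = 0 ∨ wpump t = 1) ∧
    wpump t + wgen t ≤ 1 ∧
    Ppump t = ∑ i, Xp t i ∧
    (∀ i, (zp t i = 0 ∨ zp t i = 1) ∧
      l i * zp t i ≤ Xp t i ∧ Xp t i ≤ u i * zp t i) ∧
    (∑ i, zp t i) = wpump t ∧
    Pgen t = ∑ i, Xg t i ∧
    (∀ i, (zg t i = 0 ∨ zg t i = 1) ∧
      l' i * zg t i ≤ Xg t i ∧ Xg t i ≤ u' i * zg t i) ∧
    (∑ i, zg t i) = wgen t ∧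
    s t = s (t - 1) + α * Ppump t - β * Pgen t ∧
    s (t - 1) + α * Ppump t ≤ Shi ∧
    Slo ≤ s (t - 1) - β * Pgen t) ∧
  s 0 = S0 ∧ s T = ST

/-! In every period both formulations admit exactly the same pairs of total powers: no unit
generates or no unit pumps, and each total lies in `[∑_{g∈S} a_g, ∑_{g∈S} b_g]` for the
(possibly empty) set `S` of units committed to that mode. In the standard formulation `S` is the
set of units with status `1`, and a total in that range is shared among them by one common convex
combination of their bounds. In the presolved formulation the binaries `z` select at most one
interval, which by the hypothesis on the unions is such a range for a nonempty `S`; the plant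
status `w` must then be re-chosen as `1` exactly when `S` is nonempty. Since the storage
constraints involve only the totals, the two projections coincide. -/

open Finset Set

namespace PumpedHydro

variable {ι : Type*}

theorem exists_sum_eq_iff_mem_Icc {A : Finset ι} {a b : ι → ℝ} (hab : ∀ i ∈ A, a i ≤ b i)
    {P : ℝ} :
    (∃ X : ι → ℝ, (∀ i ∈ A, X i ∈ Icc (a i) (b i)) ∧ P = ∑ i ∈ A, X i) ↔
      P ∈ Icc (∑ i ∈ A, a i) (∑ i ∈ A, b i) := by
  constructor
  · rintro ⟨X, hX, rfl⟩
    exact ⟨sum_le_sum fun i hi => (hX i hi).1, sum_le_sum fun i hi => (hX i hi).2⟩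
  · intro hP
    -- split `P` in the same convex proportion `s : t` between every `[a i, b i]`
    rw [← segment_eq_Icc (sum_le_sum hab)] at hP
    obtain ⟨s, t, hs, ht, hst, rfl⟩ := hP
    refine ⟨fun i => s * a i + t * b i, fun i hi => ?_, ?_⟩
    · rw [← segment_eq_Icc (hab i hi)]
      exact ⟨s, t, hs, ht, hst, rfl⟩
    · simp [sum_add_distrib, mul_sum]

theorem onOff_iff {z x a b : ℝ} :
    ((z = 0 ∨ z = 1) ∧ a * z ≤ x ∧ x ≤ b * z) ↔ (z = 0 ∧ x = 0) ∨ (z = 1 ∧ x ∈ Icc a b) := by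
  constructor
  · rintro ⟨rfl | rfl, hlo, hhi⟩
    · simp only [mul_zero] at hlo hhi
      exact Or.inl ⟨rfl, le_antisymm hhi hlo⟩
    · simp only [mul_one] at hlo hhi
      exact Or.inr ⟨rfl, hlo, hhi⟩
  · rintro (⟨rfl, rfl⟩ | ⟨rfl, hlo, hhi⟩) <;> simp [*]

theorem exists_exclusiveModes {Sg Sp : Finset ι} (hS : Sg = ∅ ∨ Sp = ∅) :
    ∃ wg wp : ℝ, (wg = 0 ∨ wg = 1) ∧ (wp = 0 ∨ wp = 1) ∧ wp + wg ≤ 1 ∧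
      (Sg.Nonempty ↔ wg = 1) ∧ (Sp.Nonempty ↔ wp = 1) := by
  refine ⟨if Sg.Nonempty then 1 else 0, if Sp.Nonempty then 1 else 0, ?_⟩
  rcases hS with rfl | rfl <;> split_ifs <;> simp_all

def ExclusiveDispatch (agen bgen apump bpump : ι → ℝ) (Pgen Ppump : ℝ) : Prop :=
  ∃ Sg Sp : Finset ι, (Sg = ∅ ∨ Sp = ∅) ∧ Pgen ∈ Icc (∑ g ∈ Sg, agen g) (∑ g ∈ Sg, bgen g) ∧
    Ppump ∈ Icc (∑ g ∈ Sp, apump g) (∑ g ∈ Sp, bpump g)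

def StandardPeriod (agen bgen apump bpump ugen upump uoff pgen ppump : ι → ℝ)
    (wgen wpump : ℝ) : Prop :=
  (∀ g, (ugen g = 0 ∨ ugen g = 1) ∧ (upump g = 0 ∨ upump g = 1) ∧ (uoff g = 0 ∨ uoff g = 1) ∧
    ugen g + upump g + uoff g = 1 ∧
    agen g * ugen g ≤ pgen g ∧ pgen g ≤ bgen g * ugen g ∧
    apump g * upump g ≤ ppump g ∧ ppump g ≤ bpump g * upump g ∧
    upump g ≤ wpump ∧ ugen g ≤ wgen) ∧
  (wgen = 0 ∨ wgen = 1) ∧ (wpump = 0 ∨ wpump = 1) ∧ wpump + wgen ≤ 1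

section Fintype

variable [Fintype ι] [DecidableEq ι]

theorem sum_eq_card_of_binary {z : ι → ℝ} {A : Finset ι}
    (hz : ∀ i, (z i = 0 ∨ z i = 1) ∧ (z i = 1 ↔ i ∈ A)) : ∑ i, z i = #A := by
  calc ∑ i, z i = ∑ i, if i ∈ A then (1 : ℝ) else 0 := by
        refine sum_congr rfl fun i _ => ?_
        rcases hz i with ⟨h | h, hA⟩ <;> simp_all
    _ = #A := by simp

theorem exists_onOff_iff {A : Finset ι} {a b : ι → ℝ} {P : ℝ} :
    (∃ z X : ι → ℝ, (∀ i, ((z i = 0 ∨ z i = 1) ∧ a i * z i ≤ X i ∧ X i ≤ b i * z i) ∧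
        (z i = 1 ↔ i ∈ A)) ∧ P = ∑ i, X i) ↔
      ∃ X : ι → ℝ, (∀ i ∈ A, X i ∈ Icc (a i) (b i)) ∧ P = ∑ i ∈ A, X i := by
  constructor
  · rintro ⟨z, X, hzX, rfl⟩
    have hX : ∀ i, (i ∉ A ∧ X i = 0) ∨ (i ∈ A ∧ X i ∈ Icc (a i) (b i)) := fun i => by
      rw [← (hzX i).2]
      rcases onOff_iff.mp (hzX i).1 with h | h <;> simp [h]
    refine ⟨X, fun i hi => ?_, (sum_subset (subset_univ A) fun i _ hi => ?_).symm⟩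
    · rcases hX i with h | h
      exacts [absurd hi h.1, h.2]
    · rcases hX i with h | h
      exacts [h.2, absurd h.1 hi]
  · rintro ⟨X, hX, rfl⟩
    refine ⟨fun i => if i ∈ A then 1 else 0, fun i => if i ∈ A then X i else 0,
      fun i => ?_, by simp [sum_ite_mem]⟩
    by_cases hi : i ∈ A
    · simpa [hi] using hX i hi
    · simp [hi]

theorem exists_unitCommitment_iff {a b : ι → ℝ} (hab : ∀ i, a i ≤ b i) {w P : ℝ}
    (hw : 0 ≤ w) :
    (∃ u p : ι → ℝ, (∀ i, ((u i = 0 ∨ u i = 1) ∧ a i * u i ≤ p i ∧ p i ≤ b i * u i) ∧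
        u i ≤ w) ∧ P = ∑ i, p i) ↔
      ∃ S : Finset ι, (S.Nonempty → 1 ≤ w) ∧ P ∈ Icc (∑ i ∈ S, a i) (∑ i ∈ S, b i) := by
  constructor
  · rintro ⟨u, p, hup, hP⟩
    refine ⟨univ.filter (u · = 1), fun ⟨i, hi⟩ => ?_, ?_⟩
    · simpa [(mem_filter.mp hi).2] using (hup i).2
    · rw [← exists_sum_eq_iff_mem_Icc fun i _ => hab i, ← exists_onOff_iff]
      exact ⟨u, p, fun i => ⟨(hup i).1, by simp⟩, hP⟩
  · rintro ⟨S, hS, hP⟩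
    rw [← exists_sum_eq_iff_mem_Icc fun i _ => hab i, ← exists_onOff_iff] at hP
    obtain ⟨u, p, hup, rfl⟩ := hP
    refine ⟨u, p, fun i => ⟨(hup i).1, ?_⟩, rfl⟩
    rcases (hup i).1.1 with h | h
    · exact h ▸ hw
    · exact h ▸ hS ⟨i, (hup i).2.mp h⟩

theorem exists_intervalSelection_iff_exists_card {l u : ι → ℝ} {w P : ℝ} :
    (∃ X z : ι → ℝ, P = ∑ i, X i ∧
        (∀ i, (z i = 0 ∨ z i = 1) ∧ l i * z i ≤ X i ∧ X i ≤ u i * z i) ∧ ∑ i, z i = w) ↔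
      ∃ A : Finset ι, (#A : ℝ) = w ∧
        ∃ X : ι → ℝ, (∀ i ∈ A, X i ∈ Icc (l i) (u i)) ∧ P = ∑ i ∈ A, X i := by
  constructor
  · rintro ⟨X, z, hP, hzX, rfl⟩
    refine ⟨univ.filter (z · = 1), ?_, exists_onOff_iff.mp ⟨z, X, fun i => ⟨hzX i, by simp⟩, hP⟩⟩
    exact (sum_eq_card_of_binary fun i => ⟨(hzX i).1, by simp⟩).symm
  · rintro ⟨A, rfl, hX⟩
    obtain ⟨z, X, hzX, hP⟩ := exists_onOff_iff.mpr hX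
    exact ⟨X, z, hP, fun i => (hzX i).1, sum_eq_card_of_binary fun i => ⟨(hzX i).1.1, (hzX i).2⟩⟩

theorem exists_intervalSelection_iff {l u : ι → ℝ} {w P : ℝ} (hw : w = 0 ∨ w = 1) :
    (∃ X z : ι → ℝ, P = ∑ i, X i ∧
        (∀ i, (z i = 0 ∨ z i = 1) ∧ l i * z i ≤ X i ∧ X i ≤ u i * z i) ∧ ∑ i, z i = w) ↔
      (w = 0 ∧ P = 0) ∨ (w = 1 ∧ P ∈ ⋃ i, Icc (l i) (u i)) := by
  rw [exists_intervalSelection_iff_exists_card]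
  rcases hw with rfl | rfl
  · simp [card_eq_zero]
  · simp only [Nat.cast_eq_one, card_eq_one, one_ne_zero, false_and, true_and, false_or,
      mem_iUnion]
    constructor
    · rintro ⟨_, ⟨i, rfl⟩, X, hX, rfl⟩
      exact ⟨i, by simpa using hX⟩
    · rintro ⟨i, hP⟩
      exact ⟨{i}, ⟨i, rfl⟩, fun _ => P, by simpa using hP, by simp⟩

theorem exists_standardPeriod_iff {agen bgen apump bpump : ι → ℝ}
    (hgen : ∀ g, agen g ≤ bgen g) (hpump : ∀ g, apump g ≤ bpump g) {Pgen Ppump : ℝ} :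
    (∃ ugen upump uoff pgen ppump : ι → ℝ, ∃ wgen wpump : ℝ,
        StandardPeriod agen bgen apump bpump ugen upump uoff pgen ppump wgen wpump ∧
        Pgen = ∑ g, pgen g ∧ Ppump = ∑ g, ppump g) ↔
      ExclusiveDispatch agen bgen apump bpump Pgen Ppump := by
  have nonneg : ∀ w : ℝ, w = 0 ∨ w = 1 → 0 ≤ w := by rintro w (rfl | rfl) <;> norm_num
  constructor
  · rintro ⟨ug, up, uo, pg, pp, wg, wp, ⟨hu, hwg, hwp, hw⟩, hPg, hPp⟩
    obtain ⟨Sg, hSg, hg⟩ := (exists_unitCommitment_iff hgen (nonneg wg hwg)).mp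
      ⟨ug, pg, fun g => by
        obtain ⟨h, -, -, -, hlo, hhi, -, -, -, hw⟩ := hu g
        exact ⟨⟨h, hlo, hhi⟩, hw⟩, hPg⟩
    obtain ⟨Sp, hSp, hp⟩ := (exists_unitCommitment_iff hpump (nonneg wp hwp)).mp
      ⟨up, pp, fun g => by
        obtain ⟨-, h, -, -, -, -, hlo, hhi, hw, -⟩ := hu g
        exact ⟨⟨h, hlo, hhi⟩, hw⟩, hPp⟩
    refine ⟨Sg, Sp, ?_, hg, hp⟩
    by_contra! hS
    linarith [hSg hS.1, hSp hS.2]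
  · rintro ⟨Sg, Sp, hS, hg, hp⟩
    obtain ⟨wg, wp, hwg, hwp, hw, hSg, hSp⟩ := exists_exclusiveModes hS
    obtain ⟨ug, pg, hug, rfl⟩ := (exists_unitCommitment_iff hgen (nonneg wg hwg)).mpr
      ⟨Sg, fun h => (hSg.mp h).ge, hg⟩
    obtain ⟨up, pp, hup, rfl⟩ := (exists_unitCommitment_iff hpump (nonneg wp hwp)).mpr
      ⟨Sp, fun h => (hSp.mp h).ge, hp⟩
    refine ⟨ug, up, fun g => 1 - ug g - up g, pg, pp, wg, wp, ⟨fun g => ?_, hwg, hwp, hw⟩,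
      rfl, rfl⟩
    obtain ⟨⟨hg01, hglo, hghi⟩, hgw⟩ := hug g
    obtain ⟨⟨hp01, hplo, hphi⟩, hpw⟩ := hup g
    refine ⟨hg01, hp01, ?_, by ring, hglo, hghi, hplo, hphi, hpw, hgw⟩
    have hexcl : ug g + up g ≤ 1 := by linarith
    change 1 - ug g - up g = 0 ∨ 1 - ug g - up g = 1
    grind

end Fintype

section Presolved

variable {κ κ' : Type*} [Fintype κ] [Fintype κ'] [DecidableEq κ] [DecidableEq κ']

theorem exists_intervalSelection_iff_exists_finset {l u : κ → ℝ} {a b : ι → ℝ}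
    (hUnion : (⋃ i, Icc (l i) (u i)) =
      ⋃ S ∈ {S : Finset ι | S.Nonempty}, Icc (∑ g ∈ S, a g) (∑ g ∈ S, b g))
    {w P : ℝ} (hw : w = 0 ∨ w = 1) :
    (∃ X z : κ → ℝ, P = ∑ i, X i ∧
        (∀ i, (z i = 0 ∨ z i = 1) ∧ l i * z i ≤ X i ∧ X i ≤ u i * z i) ∧ ∑ i, z i = w) ↔
      ∃ S : Finset ι, (S.Nonempty ↔ w = 1) ∧ P ∈ Icc (∑ g ∈ S, a g) (∑ g ∈ S, b g) := by
  rw [exists_intervalSelection_iff hw, hUnion]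
  rcases hw with rfl | rfl
  · simp only [true_and, zero_ne_one, false_and, or_false, iff_false,
      Finset.not_nonempty_iff_eq_empty, exists_eq_left, sum_empty, Set.mem_Icc]
    exact ⟨fun h => ⟨h.ge, h.le⟩, fun h => le_antisymm h.2 h.1⟩
  · simp only [one_ne_zero, false_and, true_and, false_or, iff_true, mem_iUnion, mem_ofPred_eq,
      exists_prop]

def PresolvedPeriod (l u : κ → ℝ) (l' u' : κ' → ℝ) (Pgen Ppump : ℝ) (Xp zp : κ → ℝ)
    (Xg zg : κ' → ℝ) (wgen wpump : ℝ) : Prop :=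
  (wgen = 0 ∨ wgen = 1) ∧ (wpump = 0 ∨ wpump = 1) ∧ wpump + wgen ≤ 1 ∧
  Ppump = ∑ i, Xp i ∧
  (∀ i, (zp i = 0 ∨ zp i = 1) ∧ l i * zp i ≤ Xp i ∧ Xp i ≤ u i * zp i) ∧
  (∑ i, zp i) = wpump ∧
  Pgen = ∑ i, Xg i ∧
  (∀ i, (zg i = 0 ∨ zg i = 1) ∧ l' i * zg i ≤ Xg i ∧ Xg i ≤ u' i * zg i) ∧
  (∑ i, zg i) = wgen

theorem exists_presolvedPeriod_iff {agen bgen apump bpump : ι → ℝ} {l u : κ → ℝ}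
    {l' u' : κ' → ℝ}
    (hpumpUnion : (⋃ i, Icc (l i) (u i)) =
      ⋃ S ∈ {S : Finset ι | S.Nonempty}, Icc (∑ g ∈ S, apump g) (∑ g ∈ S, bpump g))
    (hgenUnion : (⋃ i, Icc (l' i) (u' i)) =
      ⋃ S ∈ {S : Finset ι | S.Nonempty}, Icc (∑ g ∈ S, agen g) (∑ g ∈ S, bgen g))
    {Pgen Ppump : ℝ} :
    (∃ Xp zp Xg zg wgen wpump, PresolvedPeriod l u l' u' Pgen Ppump Xp zp Xg zg wgen wpump) ↔
      ExclusiveDispatch agen bgen apump bpump Pgen Ppump := by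
  constructor
  · rintro ⟨Xp, zp, Xg, zg, wg, wp, hwg, hwp, hw, hPp, hzp, hzpw, hPg, hzg, hzgw⟩
    obtain ⟨Sp, hSp, hp⟩ :=
      (exists_intervalSelection_iff_exists_finset hpumpUnion hwp).mp ⟨Xp, zp, hPp, hzp, hzpw⟩
    obtain ⟨Sg, hSg, hg⟩ :=
      (exists_intervalSelection_iff_exists_finset hgenUnion hwg).mp ⟨Xg, zg, hPg, hzg, hzgw⟩
    refine ⟨Sg, Sp, ?_, hg, hp⟩
    by_contra! hS
    linarith [hSg.mp hS.1, hSp.mp hS.2]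
  · rintro ⟨Sg, Sp, hS, hg, hp⟩
    obtain ⟨wg, wp, hwg, hwp, hw, hSg, hSp⟩ := exists_exclusiveModes hS
    obtain ⟨Xp, zp, hPp, hzp, hzpw⟩ :=
      (exists_intervalSelection_iff_exists_finset hpumpUnion hwp).mpr ⟨Sp, hSp, hp⟩
    obtain ⟨Xg, zg, hPg, hzg, hzgw⟩ :=
      (exists_intervalSelection_iff_exists_finset hgenUnion hwg).mpr ⟨Sg, hSg, hg⟩
    exact ⟨Xp, zp, Xg, zg, wg, wp, hwg, hwp, hw, hPp, hzp, hzpw, hPg, hzg, hzgw⟩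

end Presolved

def StorageFeasible (T : ℕ) (α β Slo Shi S0 ST : ℝ) (Pgen Ppump s : ℕ → ℝ) : Prop :=
  (∀ t : ℕ, 1 ≤ t → t ≤ T →
    s t = s (t - 1) + α * Ppump t - β * Pgen t ∧
    s (t - 1) + α * Ppump t ≤ Shi ∧
    Slo ≤ s (t - 1) - β * Pgen t) ∧
  s 0 = S0 ∧ s T = ST

theorem storageFeasible_congr {T : ℕ} {α β Slo Shi S0 ST : ℝ}
    {Pgen Ppump Pgen' Ppump' s : ℕ → ℝ}
    (h : ∀ t, 1 ≤ t → t ≤ T → Pgen t = Pgen' t ∧ Ppump t = Ppump' t) :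
    StorageFeasible T α β Slo Shi S0 ST Pgen Ppump s ↔
      StorageFeasible T α β Slo Shi S0 ST Pgen' Ppump' s := by
  refine and_congr_left' (forall_congr' fun t => imp_congr_right fun h₁ =>
    imp_congr_right fun h₂ => ?_)
  rw [(h t h₁ h₂).1, (h t h₁ h₂).2]

theorem standardFeasibleN_iff {n T : ℕ} {agen bgen apump bpump : Fin n → ℝ}
    {α β Slo Shi S0 ST : ℝ} {ugen upump uoff pgen ppump : Fin n → ℕ → ℝ}
    {s wgen wpump : ℕ → ℝ} :
    StandardFeasibleN n T agen bgen apump bpump α β Slo Shi S0 ST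
        ugen upump uoff pgen ppump s wgen wpump ↔
      (∀ t, 1 ≤ t → t ≤ T → StandardPeriod agen bgen apump bpump (ugen · t) (upump · t)
          (uoff · t) (pgen · t) (ppump · t) (wgen t) (wpump t)) ∧
        StorageFeasible T α β Slo Shi S0 ST (fun t => ∑ g, pgen g t)
          (fun t => ∑ g, ppump g t) s := by
  rw [StandardFeasibleN, forall_comm]
  simp only [StandardPeriod, StorageFeasible, forall_and, and_assoc, imp_forall_iff]

theorem presolvedFeasible_iff {T k k' : ℕ} {l u : Fin k → ℝ} {l' u' : Fin k' → ℝ}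
    {α β Slo Shi S0 ST : ℝ} {Pgen Ppump : ℕ → ℝ} {Xp zp : ℕ → Fin k → ℝ}
    {Xg zg : ℕ → Fin k' → ℝ} {s wgen wpump : ℕ → ℝ} :
    PresolvedFeasible T k k' l u l' u' α β Slo Shi S0 ST Pgen Ppump Xp zp Xg zg s wgen wpump ↔
      (∀ t, 1 ≤ t → t ≤ T → PresolvedPeriod l u l' u' (Pgen t) (Ppump t) (Xp t) (zp t)
          (Xg t) (zg t) (wgen t) (wpump t)) ∧
        StorageFeasible T α β Slo Shi S0 ST Pgen Ppump s := by
  simp only [PresolvedFeasible, PresolvedPeriod, StorageFeasible, forall_and, and_assoc]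

theorem exists_standardFeasibleN_iff {n T : ℕ} {agen bgen apump bpump : Fin n → ℝ}
    (hgen : ∀ g, agen g ≤ bgen g) (hpump : ∀ g, apump g ≤ bpump g)
    {α β Slo Shi S0 ST : ℝ} {Pgen Ppump s : ℕ → ℝ} :
    (∃ ugen upump uoff pgen ppump : Fin n → ℕ → ℝ, ∃ wgen wpump : ℕ → ℝ,
        StandardFeasibleN n T agen bgen apump bpump α β Slo Shi S0 ST
          ugen upump uoff pgen ppump s wgen wpump ∧
        ∀ t : ℕ, 1 ≤ t → t ≤ T →
          Pgen t = ∑ g : Fin n, pgen g t ∧ Ppump t = ∑ g : Fin n, ppump g t) ↔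
      (∀ t, 1 ≤ t → t ≤ T → ExclusiveDispatch agen bgen apump bpump (Pgen t) (Ppump t)) ∧
        StorageFeasible T α β Slo Shi S0 ST Pgen Ppump s := by
  constructor
  · rintro ⟨ug, up, uo, pg, pp, wg, wp, h, hsum⟩
    rw [standardFeasibleN_iff] at h
    exact ⟨fun t h₁ h₂ => (exists_standardPeriod_iff hgen hpump).mp
      ⟨_, _, _, _, _, _, _, h.1 t h₁ h₂, hsum t h₁ h₂⟩, (storageFeasible_congr hsum).mpr h.2⟩
  · rintro ⟨hdispatch, hstorage⟩
    have := fun t (h₁ : 1 ≤ t) (h₂ : t ≤ T) =>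
      (exists_standardPeriod_iff hgen hpump).mpr (hdispatch t h₁ h₂)
    choose! ug up uo pg pp wg wp hperiod hsum using this
    exact ⟨fun g t => ug t g, fun g t => up t g, fun g t => uo t g, fun g t => pg t g,
      fun g t => pp t g, wg, wp,
      standardFeasibleN_iff.mpr ⟨hperiod, (storageFeasible_congr hsum).mp hstorage⟩, hsum⟩

theorem exists_presolvedFeasible_iff {n T k k' : ℕ} {agen bgen apump bpump : Fin n → ℝ}
    {l u : Fin k → ℝ} {l' u' : Fin k' → ℝ}
    (hpumpUnion : (⋃ i, Set.Icc (l i) (u i)) =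
      ⋃ S ∈ {S : Finset (Fin n) | S.Nonempty},
        Set.Icc (∑ g ∈ S, apump g) (∑ g ∈ S, bpump g))
    (hgenUnion : (⋃ i, Set.Icc (l' i) (u' i)) =
      ⋃ S ∈ {S : Finset (Fin n) | S.Nonempty},
        Set.Icc (∑ g ∈ S, agen g) (∑ g ∈ S, bgen g))
    {α β Slo Shi S0 ST : ℝ} {Pgen Ppump s : ℕ → ℝ} :
    (∃ (Xp : ℕ → Fin k → ℝ) (zp : ℕ → Fin k → ℝ)
        (Xg : ℕ → Fin k' → ℝ) (zg : ℕ → Fin k' → ℝ) (wgen wpump : ℕ → ℝ),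
        PresolvedFeasible T k k' l u l' u' α β Slo Shi S0 ST
          Pgen Ppump Xp zp Xg zg s wgen wpump) ↔
      (∀ t, 1 ≤ t → t ≤ T → ExclusiveDispatch agen bgen apump bpump (Pgen t) (Ppump t)) ∧
        StorageFeasible T α β Slo Shi S0 ST Pgen Ppump s := by
  simp only [presolvedFeasible_iff]
  constructor
  · rintro ⟨Xp, zp, Xg, zg, wg, wp, hperiod, hstorage⟩
    exact ⟨fun t h₁ h₂ => (exists_presolvedPeriod_iff hpumpUnion hgenUnion).mp
      ⟨_, _, _, _, _, _, hperiod t h₁ h₂⟩, hstorage⟩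
  · rintro ⟨hdispatch, hstorage⟩
    have := fun t (h₁ : 1 ≤ t) (h₂ : t ≤ T) =>
      (exists_presolvedPeriod_iff hpumpUnion hgenUnion).mpr (hdispatch t h₁ h₂)
    choose! Xp zp Xg zg wg wp hperiod using this
    exact ⟨Xp, zp, Xg, zg, wg, wp, hperiod, hstorage⟩

end PumpedHydro

theorem standard_eq_presolved_projection_general (n T : ℕ)
    (agen bgen apump bpump : Fin n → ℝ)
    (hgen : ∀ g, agen g ≤ bgen g)
    (hpump : ∀ g, apump g ≤ bpump g)
    (α β Slo Shi S0 ST : ℝ)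
    (k k' : ℕ) (l u : Fin k → ℝ) (l' u' : Fin k' → ℝ)
    (hpumpUnion : (⋃ i, Set.Icc (l i) (u i)) =
      ⋃ S ∈ {S : Finset (Fin n) | S.Nonempty},
        Set.Icc (∑ g ∈ S, apump g) (∑ g ∈ S, bpump g))
    (hgenUnion : (⋃ i, Set.Icc (l' i) (u' i)) =
      ⋃ S ∈ {S : Finset (Fin n) | S.Nonempty},
        Set.Icc (∑ g ∈ S, agen g) (∑ g ∈ S, bgen g)) :
    {x : (ℕ → ℝ) × (ℕ → ℝ) × (ℕ → ℝ) |
      ∃ ugen upump uoff pgen ppump : Fin n → ℕ → ℝ, ∃ wgen wpump : ℕ → ℝ,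
        StandardFeasibleN n T agen bgen apump bpump α β Slo Shi S0 ST
          ugen upump uoff pgen ppump x.2.2 wgen wpump ∧
        ∀ t : ℕ, 1 ≤ t → t ≤ T →
          x.1 t = ∑ g : Fin n, pgen g t ∧ x.2.1 t = ∑ g : Fin n, ppump g t}
    = {x : (ℕ → ℝ) × (ℕ → ℝ) × (ℕ → ℝ) |
      ∃ (Xp : ℕ → Fin k → ℝ) (zp : ℕ → Fin k → ℝ)
        (Xg : ℕ → Fin k' → ℝ) (zg : ℕ → Fin k' → ℝ) (wgen wpump : ℕ → ℝ),
        PresolvedFeasible T k k' l u l' u' α β Slo Shi S0 ST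
          x.1 x.2.1 Xp zp Xg zg x.2.2 wgen wpump} :=
  Set.ext fun _ => (PumpedHydro.exists_standardFeasibleN_iff hgen hpump).trans
    (PumpedHydro.exists_presolvedFeasible_iff hpumpUnion hgenUnion).symm

/-- The standard and presolved formulations for units with common efficiencies
have the same projection onto the total powers and state of charge
`(Pgen, Ppump, s)`:  here the `[l i, u i]` are pairwise disjoint closed
intervals whose union is the union, over nonempty subsets `S` of the units, of
`[∑_{g∈S} apump g, ∑_{g∈S} bpump g]`, and similarly the `[l' i, u' i]` for the
generation bounds. -/
theorem standard_eq_presolved_projection (n T : ℕ) (hn : 1 ≤ n) (hT : 1 ≤ T)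
    (agen bgen apump bpump : Fin n → ℝ)
    (hgen0 : ∀ g, 0 ≤ agen g) (hgen : ∀ g, agen g ≤ bgen g)
    (hpump0 : ∀ g, 0 ≤ apump g) (hpump : ∀ g, apump g ≤ bpump g)
    (α β Slo Shi S0 ST : ℝ) (hα : 0 ≤ α) (hβ : 0 ≤ β) (hS : Slo ≤ Shi)
    (k k' : ℕ) (l u : Fin k → ℝ) (l' u' : Fin k' → ℝ)
    (hlu : ∀ i, l i ≤ u i) (hdisj : ∀ i j : Fin k, i < j → u i < l j)
    (hlu' : ∀ i, l' i ≤ u' i) (hdisj' : ∀ i j : Fin k', i < j → u' i < l' j)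
    (hpumpUnion : (⋃ i, Set.Icc (l i) (u i)) =
      ⋃ S ∈ {S : Finset (Fin n) | S.Nonempty},
        Set.Icc (∑ g ∈ S, apump g) (∑ g ∈ S, bpump g))
    (hgenUnion : (⋃ i, Set.Icc (l' i) (u' i)) =
      ⋃ S ∈ {S : Finset (Fin n) | S.Nonempty},
        Set.Icc (∑ g ∈ S, agen g) (∑ g ∈ S, bgen g)) :
    {x : (ℕ → ℝ) × (ℕ → ℝ) × (ℕ → ℝ) |
      ∃ ugen upump uoff pgen ppump : Fin n → ℕ → ℝ, ∃ wgen wpump : ℕ → ℝ,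
        StandardFeasibleN n T agen bgen apump bpump α β Slo Shi S0 ST
          ugen upump uoff pgen ppump x.2.2 wgen wpump ∧
        ∀ t : ℕ, 1 ≤ t → t ≤ T →
          x.1 t = ∑ g : Fin n, pgen g t ∧ x.2.1 t = ∑ g : Fin n, ppump g t}
    = {x : (ℕ → ℝ) × (ℕ → ℝ) × (ℕ → ℝ) |
      ∃ (Xp : ℕ → Fin k → ℝ) (zp : ℕ → Fin k → ℝ)
        (Xg : ℕ → Fin k' → ℝ) (zg : ℕ → Fin k' → ℝ) (wgen wpump : ℕ → ℝ),
        PresolvedFeasible T k k' l u l' u' α β Slo Shi S0 ST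
          x.1 x.2.1 Xp zp Xg zg x.2.2 wgen wpump} :=
  standard_eq_presolved_projection_general n T agen bgen apump bpump hgen hpump α β Slo Shi S0 ST k
    k' l u l' u' hpumpUnion hgenUnion
end
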